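/- Let f_w be an l-layer MPGNN (l ≥ 2) on graphs with n nodes, with a diffusion matrix P ∈ ℝ^{n×n}, nonzero weights satisfying ‖U_i‖₂ ≤ M₁ for i ∈ [l−1] and ‖W_i‖₂ ≤ M₂ for i ∈ [l], and entrywise L-Lipschitz nonlinearities φ_k, ρ_k, ψ_k with φ_k(0)=ρ_k(0)=ψ_k(0)=0. Let ΔW_1,…,ΔW_l and ΔU_1,…,ΔU_{l−1} be perturbation matrices of matching sizes, and let η = max over i of the ratios ‖ΔU_i‖₂/‖U_i‖₂ and ‖ΔW_i‖₂/‖W_i‖₂; assume η ≤ 1/l. Set τ = L³ M₂ ‖P‖₂. Then for every input graph G = (X, A): if τ = 1, then ‖f_{w+Δw}(G) − f_w(G)‖₂ ≤ e · η · L M₁ M₂ · ‖X‖₂ · (l+1)²; and if τ ≠ 1, then ‖f_{w+Δw}(G) − f_w(G)‖₂ ≤ e · η · l · L M₁ M₂ · ‖X‖₂ · (τ^{l−1} − 1)/(τ − 1). -/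

import Mathlib

/-!
Measure hidden representations in the Frobenius norm: an entrywise `L`-Lipschitz map vanishing
at `0` scales it by at most `L`, and `‖A B‖_F ≤ ‖A‖₂ ‖B‖_F`, `‖A B‖_F ≤ ‖A‖_F ‖B‖₂`.
With `C = L M₁ ‖X‖_F` and `τ = L³ M₂ ‖P‖₂`, one layer gives
`‖H'_{k+1}‖_F ≤ (1+η) C + (1+η) τ ‖H'_k‖_F` for the perturbed network and
`‖H'_{k+1} - H_{k+1}‖_F ≤ η C + η τ ‖H'_k‖_F + τ ‖H'_k - H_k‖_F`. Solving these recurrences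
with `S_k = ∑_{j<k} ((1+η) τ)^j` gives `‖H'_k‖_F ≤ (1+η) C S_k` and `‖H'_k - H_k‖_F ≤ k η C S_k`.
The mean-pooling readout costs a factor `1/√n`, which cancels against `‖X‖_F ≤ √n ‖X‖₂`;
finally `S_{l-1} ≤ (1+η)^{l-1} ∑_{j<l-1} τ^j` and `(1+η)^l ≤ e` because `η ≤ 1/l`.
-/

open MeasureTheory Matrix Finset

noncomputable section

/-- Spectral norm of a real matrix: the operator norm induced by Euclidean vector norms. -/
def specNorm {m n : Type*} [Fintype m] [Fintype n] [DecidableEq n] (A : Matrix m n ℝ) : ℝ :=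
  ‖LinearMap.toContinuousLinearMap (Matrix.toEuclideanLin A)‖

/-- Frobenius norm of a real matrix. -/
def frobNorm {m n : Type*} [Fintype m] [Fintype n] (A : Matrix m n ℝ) : ℝ :=
  Real.sqrt (∑ i, ∑ j, (A i j) ^ 2)

/-- Euclidean norm of a finite real vector. -/
def euclNorm {n : Type*} [Fintype n] (v : n → ℝ) : ℝ :=
  Real.sqrt (∑ i, (v i) ^ 2)

/-- Node representations of an MPGNN:
`H_0 = 0`, `H_{k+1} = φ_{k+1}(X U_{k+1} + ρ_{k+1}(P ψ_{k+1}(H_k) W_{k+1}))`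
(we index weights and nonlinearities from `0`, so `W k`, `U k`, `φ k`, `ρ k`, `ψ k`
are the paper's `W_{k+1}`, `U_{k+1}`, `φ_{k+1}`, `ρ_{k+1}`, `ψ_{k+1}`). -/
def mpgnnRep {n : ℕ} (d : ℕ → ℕ) (φ ρ ψ : ℕ → ℝ → ℝ)
    (W : ∀ k : ℕ, Matrix (Fin (d k)) (Fin (d (k + 1))) ℝ)
    (U : ∀ k : ℕ, Matrix (Fin (d 0)) (Fin (d (k + 1))) ℝ)
    (P : Matrix (Fin n) (Fin n) ℝ) (X : Matrix (Fin n) (Fin (d 0)) ℝ) :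
    (k : ℕ) → Matrix (Fin n) (Fin (d k)) ℝ
  | 0 => 0
  | (k + 1) =>
      (X * U k + (P * (mpgnnRep d φ ρ ψ W U P X k).map (ψ k) * W k).map (ρ k)).map (φ k)

/-- Output (readout) of an `l`-layer MPGNN: `f_w(G) = H_l = (1/n) 1_n H_{l-1} W_l`. -/
def mpgnnOut {n : ℕ} (d : ℕ → ℕ) (φ ρ ψ : ℕ → ℝ → ℝ)
    (W : ∀ k : ℕ, Matrix (Fin (d k)) (Fin (d (k + 1))) ℝ)
    (U : ∀ k : ℕ, Matrix (Fin (d 0)) (Fin (d (k + 1))) ℝ)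
    (P : Matrix (Fin n) (Fin n) ℝ) (X : Matrix (Fin n) (Fin (d 0)) ℝ) :
    (l : ℕ) → Fin (d l) → ℝ
  | 0 => fun _ => 0
  | (l + 1) => fun j => (n : ℝ)⁻¹ * ∑ i, (mpgnnRep d φ ρ ψ W U P X l * W l) i j

/-- The maximal relative size `η` of the perturbation: the maximum over all layers of
`‖ΔU_i‖₂/‖U_i‖₂` and `‖ΔW_i‖₂/‖W_i‖₂`. -/
def etaRatio (l : ℕ) (d : ℕ → ℕ)
    (W ΔW : ∀ k : ℕ, Matrix (Fin (d k)) (Fin (d (k + 1))) ℝ)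
    (U ΔU : ∀ k : ℕ, Matrix (Fin (d 0)) (Fin (d (k + 1))) ℝ) : ℝ :=
  sSup ({x | ∃ k, k < l ∧ specNorm (ΔW k) / specNorm (W k) = x} ∪
        {x | ∃ k, k < l - 1 ∧ specNorm (ΔU k) / specNorm (U k) = x})
section Norms

variable {m n p : Type*} [Fintype m] [Fintype n] [Fintype p]

lemma euclNorm_eq_norm (v : n → ℝ) : euclNorm v = ‖WithLp.toLp 2 v‖ := by
  simp [euclNorm, EuclideanSpace.norm_eq]

lemma euclNorm_nonneg (v : n → ℝ) : 0 ≤ euclNorm v := Real.sqrt_nonneg _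

lemma sq_euclNorm (v : n → ℝ) : euclNorm v ^ 2 = ∑ i, v i ^ 2 :=
  Real.sq_sqrt (by positivity)

lemma frobNorm_nonneg (A : Matrix m n ℝ) : 0 ≤ frobNorm A := Real.sqrt_nonneg _

lemma sq_frobNorm (A : Matrix m n ℝ) : frobNorm A ^ 2 = ∑ i, ∑ j, A i j ^ 2 :=
  Real.sq_sqrt (by positivity)

lemma sq_frobNorm_eq_sum_sq_euclNorm_col (A : Matrix m n ℝ) :
    frobNorm A ^ 2 = ∑ j, euclNorm (fun i => A i j) ^ 2 := by
  simp only [sq_frobNorm, sq_euclNorm, sum_comm (γ := m)]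

lemma frobNorm_transpose (A : Matrix m n ℝ) : frobNorm Aᵀ = frobNorm A := by
  rw [frobNorm, frobNorm, sum_comm]
  rfl

lemma frobNorm_one [DecidableEq m] : frobNorm (1 : Matrix m m ℝ) = √(Fintype.card m) := by
  simp [frobNorm, Matrix.one_apply]

open scoped Matrix.Norms.Frobenius in
lemma frobNorm_eq_norm (A : Matrix m n ℝ) : frobNorm A = ‖A‖ := by
  rw [Matrix.frobenius_norm_def, frobNorm, Real.sqrt_eq_rpow]
  simp [Real.norm_eq_abs, sq_abs]

open scoped Matrix.Norms.Frobenius in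
lemma frobNorm_add_le (A B : Matrix m n ℝ) : frobNorm (A + B) ≤ frobNorm A + frobNorm B := by
  simp only [frobNorm_eq_norm]
  exact norm_add_le A B

lemma frobNorm_le_mul_of_abs_le {c : ℝ} (hc : 0 ≤ c) {A B : Matrix m n ℝ}
    (h : ∀ i j, |A i j| ≤ c * |B i j|) : frobNorm A ≤ c * frobNorm B := by
  rw [frobNorm, Real.sqrt_le_left (mul_nonneg hc (frobNorm_nonneg B)), mul_pow, sq_frobNorm]
  simp only [mul_sum]
  gcongr with i _ j _
  simpa [mul_pow] using pow_le_pow_left₀ (abs_nonneg _) (h i j) 2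

lemma nonneg_of_forall_abs_sub_le_mul {L : ℝ} {f : ℝ → ℝ} (hf : ∀ x y, |f x - f y| ≤ L * |x - y|) :
    0 ≤ L := by
  simpa using (abs_nonneg _).trans (hf 1 0)

lemma frobNorm_map_sub_map_le {L : ℝ} {f : ℝ → ℝ} (hf : ∀ x y, |f x - f y| ≤ L * |x - y|)
    (A B : Matrix m n ℝ) : frobNorm (A.map f - B.map f) ≤ L * frobNorm (A - B) :=
  frobNorm_le_mul_of_abs_le (nonneg_of_forall_abs_sub_le_mul hf) fun i j => hf (A i j) (B i j)

lemma frobNorm_map_le {L : ℝ} {f : ℝ → ℝ} (hf : ∀ x y, |f x - f y| ≤ L * |x - y|) (hf0 : f 0 = 0)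
    (A : Matrix m n ℝ) : frobNorm (A.map f) ≤ L * frobNorm A := by
  simpa [Matrix.map_zero f hf0] using frobNorm_map_sub_map_le hf A 0

open scoped Matrix.Norms.L2Operator in
lemma specNorm_eq_norm [DecidableEq n] (A : Matrix m n ℝ) : specNorm A = ‖A‖ := rfl

lemma specNorm_nonneg [DecidableEq n] (A : Matrix m n ℝ) : 0 ≤ specNorm A := norm_nonneg _

open scoped Matrix.Norms.L2Operator in
lemma specNorm_pos [DecidableEq n] {A : Matrix m n ℝ} (hA : A ≠ 0) : 0 < specNorm A := by
  rw [specNorm_eq_norm]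
  exact norm_pos_iff.mpr hA

open scoped Matrix.Norms.L2Operator in
lemma specNorm_add_le [DecidableEq n] (A B : Matrix m n ℝ) :
    specNorm (A + B) ≤ specNorm A + specNorm B := by
  simp only [specNorm_eq_norm]
  exact norm_add_le A B

open scoped Matrix.Norms.L2Operator in
lemma specNorm_transpose [DecidableEq m] [DecidableEq n] (A : Matrix m n ℝ) :
    specNorm Aᵀ = specNorm A := by
  rw [specNorm_eq_norm, specNorm_eq_norm, ← Matrix.conjTranspose_eq_transpose_of_trivial,
    Matrix.l2_opNorm_conjTranspose]

open scoped Matrix.Norms.L2Operator in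
lemma euclNorm_mulVec_le [DecidableEq n] (A : Matrix m n ℝ) (v : n → ℝ) :
    euclNorm (A *ᵥ v) ≤ specNorm A * euclNorm v := by
  simpa [euclNorm_eq_norm, specNorm_eq_norm] using Matrix.l2_opNorm_mulVec A (WithLp.toLp 2 v)

lemma frobNorm_mul_le_specNorm_mul_frobNorm [DecidableEq n] (A : Matrix m n ℝ)
    (B : Matrix n p ℝ) : frobNorm (A * B) ≤ specNorm A * frobNorm B := by
  have hcol : ∀ j, euclNorm (fun i => (A * B) i j) ≤ specNorm A * euclNorm (fun k => B k j) :=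
    fun j => euclNorm_mulVec_le A (fun k => B k j)
  rw [← sq_le_sq₀ (frobNorm_nonneg _) (mul_nonneg (specNorm_nonneg _) (frobNorm_nonneg _)),
    mul_pow, sq_frobNorm_eq_sum_sq_euclNorm_col, sq_frobNorm_eq_sum_sq_euclNorm_col,
    mul_sum]
  gcongr with j
  rw [← mul_pow]
  exact pow_le_pow_left₀ (euclNorm_nonneg _) (hcol j) 2

lemma frobNorm_mul_le_frobNorm_mul_specNorm [DecidableEq n] [DecidableEq p] (A : Matrix m n ℝ)
    (B : Matrix n p ℝ) : frobNorm (A * B) ≤ frobNorm A * specNorm B := by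
  rw [← frobNorm_transpose, Matrix.transpose_mul, ← frobNorm_transpose A, ← specNorm_transpose B,
    mul_comm]
  exact frobNorm_mul_le_specNorm_mul_frobNorm _ _

lemma frobNorm_mul_mul_le [DecidableEq m] [DecidableEq n] [DecidableEq p] (P : Matrix m m ℝ)
    (A : Matrix m n ℝ) (B : Matrix n p ℝ) :
    frobNorm (P * A * B) ≤ specNorm P * frobNorm A * specNorm B :=
  (frobNorm_mul_le_frobNorm_mul_specNorm _ _).trans <| by
    gcongr
    · exact specNorm_nonneg _
    · exact frobNorm_mul_le_specNorm_mul_frobNorm _ _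

lemma frobNorm_le_sqrt_card_mul_specNorm [DecidableEq m] [DecidableEq n] (A : Matrix m n ℝ) :
    frobNorm A ≤ √(Fintype.card m) * specNorm A := by
  simpa [frobNorm_one] using frobNorm_mul_le_frobNorm_mul_specNorm (1 : Matrix m m ℝ) A

lemma inv_sqrt_card_mul_frobNorm_le_specNorm [DecidableEq m] [DecidableEq n] (A : Matrix m n ℝ) :
    (√(Fintype.card m))⁻¹ * frobNorm A ≤ specNorm A := by
  rcases (Real.sqrt_nonneg (Fintype.card m)).eq_or_lt with h | h
  · rw [← h, _root_.inv_zero, zero_mul]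
    exact specNorm_nonneg A
  · rw [inv_mul_le_iff₀ h]
    exact frobNorm_le_sqrt_card_mul_specNorm A

lemma euclNorm_mean_le (M : Matrix m n ℝ) :
    euclNorm (fun j => (Fintype.card m : ℝ)⁻¹ * ∑ i, M i j) ≤
      (√(Fintype.card m))⁻¹ * frobNorm M := by
  rw [euclNorm, frobNorm, ← Real.sqrt_inv, ← Real.sqrt_mul (by positivity), sum_comm,
    mul_sum]
  gcongr with j
  simpa [div_eq_inv_mul] using
    sum_div_card_sq_le_sum_sq_div_card (s := univ) (f := fun i => M i j)

end Norms

section Recurrences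

variable {R : Type*} [CommRing R] [LinearOrder R] [IsStrictOrderedRing R] {N : ℕ}

lemma le_mul_geom_sum_of_le_add_mul {a : ℕ → R} {b s : R} (hs : 0 ≤ s) (h0 : a 0 ≤ 0)
    (h : ∀ k < N, a (k + 1) ≤ b + s * a k) : ∀ k ≤ N, a k ≤ b * ∑ j ∈ range k, s ^ j := by
  intro k
  induction k with
  | zero => simpa using h0
  | succ k ih =>
    intro hk
    calc a (k + 1) ≤ b + s * a k := h k hk
      _ ≤ b + s * (b * ∑ j ∈ range k, s ^ j) := by gcongr; exact ih (by omega)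
      _ = b * ∑ j ∈ range (k + 1), s ^ j := by rw [geom_sum_succ]; ring

lemma le_nat_mul_mul_geom_sum_of_le {δ : ℕ → R} {c s : R} (hc : 0 ≤ c) (hs : 0 ≤ s)
    (h0 : δ 0 ≤ 0) (h : ∀ k < N, δ (k + 1) ≤ c * ∑ j ∈ range (k + 1), s ^ j + s * δ k) :
    ∀ k ≤ N, δ k ≤ k * c * ∑ j ∈ range k, s ^ j := by
  intro k
  induction k with
  | zero => simpa using h0
  | succ k ih =>
    intro hk
    have hS : s * ∑ j ∈ range k, s ^ j ≤ ∑ j ∈ range (k + 1), s ^ j := by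
      rw [geom_sum_succ]; linarith
    calc δ (k + 1) ≤ c * ∑ j ∈ range (k + 1), s ^ j + s * δ k := h k hk
      _ ≤ c * ∑ j ∈ range (k + 1), s ^ j + s * (k * c * ∑ j ∈ range k, s ^ j) := by
        gcongr; exact ih (by omega)
      _ = c * ∑ j ∈ range (k + 1), s ^ j + k * c * (s * ∑ j ∈ range k, s ^ j) := by ring
      _ ≤ c * ∑ j ∈ range (k + 1), s ^ j + k * c * ∑ j ∈ range (k + 1), s ^ j := by gcongr
      _ = (k + 1 : ℕ) * c * ∑ j ∈ range (k + 1), s ^ j := by push_cast; ring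

lemma geom_sum_mul_le_pow_mul_geom_sum {a s : R} (ha : 1 ≤ a) (hs : 0 ≤ s) (N : ℕ) :
    ∑ j ∈ range N, (a * s) ^ j ≤ a ^ N * ∑ j ∈ range N, s ^ j := by
  rw [mul_sum]
  refine sum_le_sum fun j hj => ?_
  rw [mul_pow]
  exact mul_le_mul_of_nonneg_right (pow_le_pow_right₀ ha (mem_range.mp hj).le) (pow_nonneg hs j)

end Recurrences

lemma one_add_pow_le_exp_one {η : ℝ} {l : ℕ} (hη : 0 ≤ η) (hl : l * η ≤ 1) :
    (1 + η) ^ l ≤ Real.exp 1 :=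
  calc (1 + η) ^ l ≤ Real.exp η ^ l := by
        gcongr; linarith [Real.add_one_le_exp η]
    _ = Real.exp (l * η) := (Real.exp_nat_mul η l).symm
    _ ≤ Real.exp 1 := Real.exp_le_exp.mpr hl

section EtaRatio

lemma etaRatio_nonneg (l : ℕ) (d : ℕ → ℕ)
    (W ΔW : ∀ k : ℕ, Matrix (Fin (d k)) (Fin (d (k + 1))) ℝ)
    (U ΔU : ∀ k : ℕ, Matrix (Fin (d 0)) (Fin (d (k + 1))) ℝ) :
    0 ≤ etaRatio l d W ΔW U ΔU := by
  refine Real.sSup_nonneg ?_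
  rintro x (⟨k, -, rfl⟩ | ⟨k, -, rfl⟩) <;> exact div_nonneg (specNorm_nonneg _) (specNorm_nonneg _)

lemma bddAbove_etaRatio_set (l : ℕ) (d : ℕ → ℕ)
    (W ΔW : ∀ k : ℕ, Matrix (Fin (d k)) (Fin (d (k + 1))) ℝ)
    (U ΔU : ∀ k : ℕ, Matrix (Fin (d 0)) (Fin (d (k + 1))) ℝ) :
    BddAbove ({x | ∃ k, k < l ∧ specNorm (ΔW k) / specNorm (W k) = x} ∪
        {x | ∃ k, k < l - 1 ∧ specNorm (ΔU k) / specNorm (U k) = x}) :=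
  (((Set.finite_lt_nat l).image _).union ((Set.finite_lt_nat (l - 1)).image _)).bddAbove

variable {l : ℕ} {d : ℕ → ℕ} {W ΔW : ∀ k : ℕ, Matrix (Fin (d k)) (Fin (d (k + 1))) ℝ}
  {U ΔU : ∀ k : ℕ, Matrix (Fin (d 0)) (Fin (d (k + 1))) ℝ}

lemma specNorm_le_etaRatio_mul_of_lt {k : ℕ} (hk : k < l) (hW : W k ≠ 0) :
    specNorm (ΔW k) ≤ etaRatio l d W ΔW U ΔU * specNorm (W k) :=
  (div_le_iff₀ (specNorm_pos hW)).mp <|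
    le_csSup (bddAbove_etaRatio_set l d W ΔW U ΔU) (Or.inl ⟨k, hk, rfl⟩)

lemma specNorm_le_etaRatio_mul_of_lt_sub_one {k : ℕ} (hk : k < l - 1) (hU : U k ≠ 0) :
    specNorm (ΔU k) ≤ etaRatio l d W ΔW U ΔU * specNorm (U k) :=
  (div_le_iff₀ (specNorm_pos hU)).mp <|
    le_csSup (bddAbove_etaRatio_set l d W ΔW U ΔU) (Or.inr ⟨k, hk, rfl⟩)

end EtaRatio

section Perturbation

variable {n : ℕ} {d : ℕ → ℕ} {φ ρ ψ : ℕ → ℝ → ℝ}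
  {W ΔW W' : ∀ k : ℕ, Matrix (Fin (d k)) (Fin (d (k + 1))) ℝ}
  {U ΔU U' : ∀ k : ℕ, Matrix (Fin (d 0)) (Fin (d (k + 1))) ℝ}
  {P : Matrix (Fin n) (Fin n) ℝ} {X : Matrix (Fin n) (Fin (d 0)) ℝ} {L M₁ M₂ η : ℝ}

lemma frobNorm_mpgnnRep_succ_le (k : ℕ) (hφ : ∀ x y, |φ k x - φ k y| ≤ L * |x - y|)
    (hρ : ∀ x y, |ρ k x - ρ k y| ≤ L * |x - y|) (hψ : ∀ x y, |ψ k x - ψ k y| ≤ L * |x - y|)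
    (hφ0 : φ k 0 = 0) (hρ0 : ρ k 0 = 0) (hψ0 : ψ k 0 = 0) :
    frobNorm (mpgnnRep d φ ρ ψ W U P X (k + 1)) ≤
      L * (frobNorm X * specNorm (U k) +
        L ^ 2 * specNorm P * specNorm (W k) * frobNorm (mpgnnRep d φ ρ ψ W U P X k)) := by
  have hL := nonneg_of_forall_abs_sub_le_mul hφ
  set H := mpgnnRep d φ ρ ψ W U P X k
  calc frobNorm (mpgnnRep d φ ρ ψ W U P X (k + 1))
      ≤ L * frobNorm (X * U k + (P * H.map (ψ k) * W k).map (ρ k)) := frobNorm_map_le hφ hφ0 _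
    _ ≤ L * (frobNorm X * specNorm (U k) +
          L * (specNorm P * (L * frobNorm H) * specNorm (W k))) := by
      gcongr
      refine (frobNorm_add_le _ _).trans (add_le_add (frobNorm_mul_le_frobNorm_mul_specNorm _ _)
        ((frobNorm_map_le hρ hρ0 _).trans ?_))
      gcongr
      refine (frobNorm_mul_mul_le _ _ _).trans ?_
      gcongr
      · exact specNorm_nonneg _
      · exact specNorm_nonneg _
      · exact frobNorm_map_le hψ hψ0 _
    _ = _ := by ring

lemma frobNorm_mpgnnRep_succ_sub_le (k : ℕ) (hφ : ∀ x y, |φ k x - φ k y| ≤ L * |x - y|)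
    (hρ : ∀ x y, |ρ k x - ρ k y| ≤ L * |x - y|) (hψ : ∀ x y, |ψ k x - ψ k y| ≤ L * |x - y|)
    (hψ0 : ψ k 0 = 0) :
    frobNorm (mpgnnRep d φ ρ ψ W' U' P X (k + 1) - mpgnnRep d φ ρ ψ W U P X (k + 1)) ≤
      L * (frobNorm X * specNorm (U' k - U k) + L ^ 2 * specNorm P *
        (specNorm (W' k - W k) * frobNorm (mpgnnRep d φ ρ ψ W' U' P X k) +
          specNorm (W k) *
            frobNorm (mpgnnRep d φ ρ ψ W' U' P X k - mpgnnRep d φ ρ ψ W U P X k))) := by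
  have hL := nonneg_of_forall_abs_sub_le_mul hφ
  set H := mpgnnRep d φ ρ ψ W U P X k
  set H' := mpgnnRep d φ ρ ψ W' U' P X k
  have hsplit : P * H'.map (ψ k) * W' k - P * H.map (ψ k) * W k =
      P * H'.map (ψ k) * (W' k - W k) + P * (H'.map (ψ k) - H.map (ψ k)) * W k := by
    simp only [Matrix.mul_sub, Matrix.sub_mul]
    abel
  calc frobNorm (mpgnnRep d φ ρ ψ W' U' P X (k + 1) - mpgnnRep d φ ρ ψ W U P X (k + 1))
      ≤ L * frobNorm (X * (U' k - U k) +
          ((P * H'.map (ψ k) * W' k).map (ρ k) - (P * H.map (ψ k) * W k).map (ρ k))) := by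
        refine (frobNorm_map_sub_map_le hφ _ _).trans_eq ?_
        rw [Matrix.mul_sub]
        congr 2
        abel
    _ ≤ L * (frobNorm X * specNorm (U' k - U k) + L * (specNorm P * (L * frobNorm H') *
          specNorm (W' k - W k) + specNorm P * (L * frobNorm (H' - H)) * specNorm (W k))) := by
      gcongr
      refine (frobNorm_add_le _ _).trans (add_le_add (frobNorm_mul_le_frobNorm_mul_specNorm _ _)
        ((frobNorm_map_sub_map_le hρ _ _).trans ?_))
      rw [hsplit]
      gcongr
      refine (frobNorm_add_le _ _).trans (add_le_add ((frobNorm_mul_mul_le _ _ _).trans ?_)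
        ((frobNorm_mul_mul_le _ _ _).trans ?_)) <;>
        gcongr <;> first
          | exact specNorm_nonneg _
          | exact frobNorm_map_le hψ hψ0 _
          | exact frobNorm_map_sub_map_le hψ _ _
    _ = _ := by ring

lemma frobNorm_mpgnnRep_le {N : ℕ} (hL : 0 ≤ L) (hM₂ : 0 ≤ M₂)
    (hLipφ : ∀ k < N, ∀ x y : ℝ, |φ k x - φ k y| ≤ L * |x - y|)
    (hLipρ : ∀ k < N, ∀ x y : ℝ, |ρ k x - ρ k y| ≤ L * |x - y|)
    (hLipψ : ∀ k < N, ∀ x y : ℝ, |ψ k x - ψ k y| ≤ L * |x - y|)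
    (hφ0 : ∀ k < N, φ k 0 = 0) (hρ0 : ∀ k < N, ρ k 0 = 0) (hψ0 : ∀ k < N, ψ k 0 = 0)
    (hU : ∀ k < N, specNorm (U k) ≤ M₁) (hW : ∀ k < N, specNorm (W k) ≤ M₂) :
    ∀ k ≤ N, frobNorm (mpgnnRep d φ ρ ψ W U P X k) ≤
      L * M₁ * frobNorm X * ∑ j ∈ range k, (L ^ 3 * M₂ * specNorm P) ^ j := by
  refine le_mul_geom_sum_of_le_add_mul
    (mul_nonneg (by positivity) (specNorm_nonneg P)) (by simp [mpgnnRep, frobNorm]) fun k hk => ?_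
  calc _ ≤ L * (frobNorm X * specNorm (U k) + L ^ 2 * specNorm P * specNorm (W k) *
          frobNorm (mpgnnRep d φ ρ ψ W U P X k)) :=
        frobNorm_mpgnnRep_succ_le k (hLipφ k hk) (hLipρ k hk) (hLipψ k hk) (hφ0 k hk) (hρ0 k hk)
          (hψ0 k hk)
    _ ≤ L * (frobNorm X * M₁ +
          L ^ 2 * specNorm P * M₂ * frobNorm (mpgnnRep d φ ρ ψ W U P X k)) := by
      have := specNorm_nonneg P
      have := frobNorm_nonneg X
      have := frobNorm_nonneg (mpgnnRep d φ ρ ψ W U P X k)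
      gcongr
      exacts [hU k hk, hW k hk]
    _ = _ := by ring

lemma frobNorm_mpgnnRep_sub_le {N : ℕ} (hL : 0 ≤ L) (hM₁ : 0 ≤ M₁) (hM₂ : 0 ≤ M₂) (hη : 0 ≤ η)
    (hLipφ : ∀ k < N, ∀ x y : ℝ, |φ k x - φ k y| ≤ L * |x - y|)
    (hLipρ : ∀ k < N, ∀ x y : ℝ, |ρ k x - ρ k y| ≤ L * |x - y|)
    (hLipψ : ∀ k < N, ∀ x y : ℝ, |ψ k x - ψ k y| ≤ L * |x - y|)
    (hφ0 : ∀ k < N, φ k 0 = 0) (hρ0 : ∀ k < N, ρ k 0 = 0) (hψ0 : ∀ k < N, ψ k 0 = 0)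
    (hW : ∀ k < N, specNorm (W k) ≤ M₂)
    (hU' : ∀ k < N, specNorm (U' k) ≤ (1 + η) * M₁)
    (hW' : ∀ k < N, specNorm (W' k) ≤ (1 + η) * M₂)
    (hΔU : ∀ k < N, specNorm (U' k - U k) ≤ η * M₁)
    (hΔW : ∀ k < N, specNorm (W' k - W k) ≤ η * M₂) :
    ∀ k ≤ N, frobNorm (mpgnnRep d φ ρ ψ W' U' P X k - mpgnnRep d φ ρ ψ W U P X k) ≤
      k * (η * (L * M₁ * frobNorm X)) *
        ∑ j ∈ range k, ((1 + η) * (L ^ 3 * M₂ * specNorm P)) ^ j := by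
  set C := L * M₁ * frobNorm X
  set τ := L ^ 3 * M₂ * specNorm P
  have hC : 0 ≤ C := by have := frobNorm_nonneg X; positivity
  have hτ : 0 ≤ τ := mul_nonneg (by positivity) (specNorm_nonneg P)
  have hH' := frobNorm_mpgnnRep_le (W := W') (U := U') (P := P) (X := X) hL (by positivity)
    hLipφ hLipρ hLipψ hφ0 hρ0 hψ0 hU' hW'
  rw [show L ^ 3 * ((1 + η) * M₂) * specNorm P = (1 + η) * τ by ring] at hH'
  refine le_nat_mul_mul_geom_sum_of_le (by positivity) (by positivity)
    (by simp [mpgnnRep, frobNorm]) fun k hk => ?_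
  set S := ∑ j ∈ range k, ((1 + η) * τ) ^ j
  set δ := frobNorm (mpgnnRep d φ ρ ψ W' U' P X k - mpgnnRep d φ ρ ψ W U P X k)
  have hδ : 0 ≤ δ := frobNorm_nonneg _
  calc _ ≤ L * (frobNorm X * specNorm (U' k - U k) + L ^ 2 * specNorm P *
          (specNorm (W' k - W k) * frobNorm (mpgnnRep d φ ρ ψ W' U' P X k) +
            specNorm (W k) * δ)) :=
        frobNorm_mpgnnRep_succ_sub_le k (hLipφ k hk) (hLipρ k hk) (hLipψ k hk) (hψ0 k hk)
    _ ≤ L * (frobNorm X * (η * M₁) + L ^ 2 * specNorm P *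
          (η * M₂ * (L * ((1 + η) * M₁) * frobNorm X * S) + M₂ * δ)) := by
      have := specNorm_nonneg P
      have := frobNorm_nonneg X
      have := frobNorm_nonneg (mpgnnRep d φ ρ ψ W' U' P X k)
      gcongr
      exacts [hΔU k hk, hΔW k hk, hH' k hk.le, hW k hk]
    _ = η * C * ((1 + η) * τ * S + 1) + τ * δ := by ring
    _ ≤ η * C * ∑ j ∈ range (k + 1), ((1 + η) * τ) ^ j + (1 + η) * τ * δ := by
      rw [geom_sum_succ]
      gcongr
      exact le_mul_of_one_le_left hτ (by linarith)

lemma euclNorm_mpgnnOut_succ_sub_le (N : ℕ) :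
    euclNorm (fun j => mpgnnOut d φ ρ ψ W' U' P X (N + 1) j - mpgnnOut d φ ρ ψ W U P X (N + 1) j) ≤
      (√n)⁻¹ * (frobNorm (mpgnnRep d φ ρ ψ W' U' P X N) * specNorm (W' N - W N) +
        frobNorm (mpgnnRep d φ ρ ψ W' U' P X N - mpgnnRep d φ ρ ψ W U P X N) * specNorm (W N)) := by
  set H := mpgnnRep d φ ρ ψ W U P X N
  set H' := mpgnnRep d φ ρ ψ W' U' P X N
  have hsplit : H' * W' N - H * W N = H' * (W' N - W N) + (H' - H) * W N := by
    simp only [Matrix.mul_sub, Matrix.sub_mul]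
    abel
  have hout : (fun j => mpgnnOut d φ ρ ψ W' U' P X (N + 1) j - mpgnnOut d φ ρ ψ W U P X (N + 1) j) =
      fun j => (Fintype.card (Fin n) : ℝ)⁻¹ * ∑ i, (H' * W' N - H * W N) i j := by
    ext j
    simp [H, H', mpgnnOut, mul_sub]
  rw [hout]
  refine (euclNorm_mean_le _).trans ?_
  rw [Fintype.card_fin, hsplit]
  gcongr
  exact (frobNorm_add_le _ _).trans (add_le_add (frobNorm_mul_le_frobNorm_mul_specNorm _ _)
    (frobNorm_mul_le_frobNorm_mul_specNorm _ _))

theorem euclNorm_mpgnnOut_sub_le (N : ℕ) (hL : 0 ≤ L) (hM₁ : 0 ≤ M₁) (hη : 0 ≤ η)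
    (hηN : (N + 1) * η ≤ 1)
    (hLipφ : ∀ k < N, ∀ x y : ℝ, |φ k x - φ k y| ≤ L * |x - y|)
    (hLipρ : ∀ k < N, ∀ x y : ℝ, |ρ k x - ρ k y| ≤ L * |x - y|)
    (hLipψ : ∀ k < N, ∀ x y : ℝ, |ψ k x - ψ k y| ≤ L * |x - y|)
    (hφ0 : ∀ k < N, φ k 0 = 0) (hρ0 : ∀ k < N, ρ k 0 = 0) (hψ0 : ∀ k < N, ψ k 0 = 0)
    (hU : ∀ k < N, specNorm (U k) ≤ M₁) (hW : ∀ k < N + 1, specNorm (W k) ≤ M₂)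
    (hΔU : ∀ k < N, specNorm (ΔU k) ≤ η * specNorm (U k))
    (hΔW : ∀ k < N + 1, specNorm (ΔW k) ≤ η * specNorm (W k)) :
    euclNorm (fun j => mpgnnOut d φ ρ ψ (fun k => W k + ΔW k) (fun k => U k + ΔU k) P X (N + 1) j -
        mpgnnOut d φ ρ ψ W U P X (N + 1) j) ≤
      Real.exp 1 * η * (N + 1) * L * M₁ * M₂ * specNorm X *
        ∑ j ∈ range N, (L ^ 3 * M₂ * specNorm P) ^ j := by
  have hM₂ : 0 ≤ M₂ := (specNorm_nonneg _).trans (hW N N.lt_succ_self)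
  have hΔU' : ∀ k < N, specNorm (ΔU k) ≤ η * M₁ := fun k hk =>
    (hΔU k hk).trans (mul_le_mul_of_nonneg_left (hU k hk) hη)
  have hΔW' : ∀ k < N + 1, specNorm (ΔW k) ≤ η * M₂ := fun k hk =>
    (hΔW k hk).trans (mul_le_mul_of_nonneg_left (hW k hk) hη)
  have hU' : ∀ k < N, specNorm (U k + ΔU k) ≤ (1 + η) * M₁ := fun k hk =>
    (specNorm_add_le _ _).trans (by linarith [hU k hk, hΔU' k hk])
  have hW' : ∀ k < N + 1, specNorm (W k + ΔW k) ≤ (1 + η) * M₂ := fun k hk =>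
    (specNorm_add_le _ _).trans (by linarith [hW k hk, hΔW' k hk])
  set τ := L ^ 3 * M₂ * specNorm P
  have hτ : 0 ≤ τ := mul_nonneg (by positivity) (specNorm_nonneg P)
  set C := L * M₁ * frobNorm X
  set S := ∑ j ∈ range N, ((1 + η) * τ) ^ j
  set T := ∑ j ∈ range N, τ ^ j
  have hH' := frobNorm_mpgnnRep_le (W := fun k => W k + ΔW k) (U := fun k => U k + ΔU k)
    (P := P) (X := X) hL (by positivity)
    hLipφ hLipρ hLipψ hφ0 hρ0 hψ0 hU' (fun k hk => hW' k (by omega)) N le_rfl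
  rw [show L ^ 3 * ((1 + η) * M₂) * specNorm P = (1 + η) * τ by ring] at hH'
  have hδ := frobNorm_mpgnnRep_sub_le (W := W) (U := U) (W' := fun k => W k + ΔW k)
    (U' := fun k => U k + ΔU k) (P := P) (X := X) hL hM₁ hM₂ hη hLipφ hLipρ hLipψ hφ0 hρ0 hψ0
    (fun k hk => hW k (by omega)) hU' (fun k hk => hW' k (by omega))
    (fun k hk => by simpa using hΔU' k hk) (fun k hk => by simpa using hΔW' k (by omega)) N le_rfl
  have hST : S ≤ (1 + η) ^ N * T := geom_sum_mul_le_pow_mul_geom_sum (by linarith) hτ N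
  have hS : 0 ≤ S := sum_nonneg fun j _ => by positivity
  have hT : 0 ≤ T := sum_nonneg fun j _ => by positivity
  have hX := inv_sqrt_card_mul_frobNorm_le_specNorm X
  rw [Fintype.card_fin] at hX
  have he : (1 + η) ^ (N + 1) ≤ Real.exp 1 := one_add_pow_le_exp_one hη (by exact_mod_cast hηN)
  have := frobNorm_nonneg X
  have := specNorm_nonneg X
  have := specNorm_nonneg (ΔW N)
  have := specNorm_nonneg (W N)
  refine (euclNorm_mpgnnOut_succ_sub_le N).trans ?_
  simp only [add_sub_cancel_left]
  calc _
      ≤ (√n)⁻¹ * (L * ((1 + η) * M₁) * frobNorm X * S * (η * M₂) + N * (η * C) * S * M₂) := by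
        gcongr
        exacts [hΔW' N N.lt_succ_self, hW N N.lt_succ_self]
    _ = (1 + η + N) * η * M₂ * L * M₁ * ((√n)⁻¹ * frobNorm X) * S := by ring
    _ ≤ (1 + η) * (N + 1) * η * M₂ * L * M₁ * specNorm X * ((1 + η) ^ N * T) := by
        gcongr
        nlinarith
    _ = (1 + η) ^ (N + 1) * (η * (N + 1) * L * M₁ * M₂ * specNorm X * T) := by ring
    _ ≤ Real.exp 1 * (η * (N + 1) * L * M₁ * M₂ * specNorm X * T) := by gcongr
    _ = _ := by ring

end Perturbation

theorem mpgnnOut_pert_norm_le_general (n l : ℕ) (hl : 2 ≤ l) (d : ℕ → ℕ) (φ ρ ψ : ℕ → ℝ → ℝ)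
    (W ΔW : ∀ k : ℕ, Matrix (Fin (d k)) (Fin (d (k + 1))) ℝ)
    (U ΔU : ∀ k : ℕ, Matrix (Fin (d 0)) (Fin (d (k + 1))) ℝ)
    (L M₁ M₂ : ℝ)
    (hLipφ : ∀ k, k < l - 1 → ∀ x y : ℝ, |φ k x - φ k y| ≤ L * |x - y|)
    (hLipρ : ∀ k, k < l - 1 → ∀ x y : ℝ, |ρ k x - ρ k y| ≤ L * |x - y|)
    (hLipψ : ∀ k, k < l - 1 → ∀ x y : ℝ, |ψ k x - ψ k y| ≤ L * |x - y|)
    (hφ0 : ∀ k, k < l - 1 → φ k 0 = 0) (hρ0 : ∀ k, k < l - 1 → ρ k 0 = 0)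
    (hψ0 : ∀ k, k < l - 1 → ψ k 0 = 0)
    (hWne : ∀ k, k < l → W k ≠ 0) (hUne : ∀ k, k < l - 1 → U k ≠ 0)
    (hU : ∀ k, k < l - 1 → specNorm (U k) ≤ M₁)
    (hW : ∀ k, k < l → specNorm (W k) ≤ M₂)
    (hη : etaRatio l d W ΔW U ΔU ≤ 1 / (l : ℝ))
    (P : Matrix (Fin n) (Fin n) ℝ) (X : Matrix (Fin n) (Fin (d 0)) ℝ) :
    (L ^ 3 * M₂ * specNorm P = 1 →
      euclNorm (fun j => mpgnnOut d φ ρ ψ (fun k => W k + ΔW k) (fun k => U k + ΔU k) P X l j -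
          mpgnnOut d φ ρ ψ W U P X l j) ≤
        Real.exp 1 * etaRatio l d W ΔW U ΔU * L * M₁ * M₂ * specNorm X * (l + 1) ^ 2) ∧
    (L ^ 3 * M₂ * specNorm P ≠ 1 →
      euclNorm (fun j => mpgnnOut d φ ρ ψ (fun k => W k + ΔW k) (fun k => U k + ΔU k) P X l j -
          mpgnnOut d φ ρ ψ W U P X l j) ≤
        Real.exp 1 * etaRatio l d W ΔW U ΔU * l * L * M₁ * M₂ * specNorm X *
          (((L ^ 3 * M₂ * specNorm P) ^ (l - 1) - 1) / (L ^ 3 * M₂ * specNorm P - 1))) := by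
  obtain ⟨N, rfl⟩ : ∃ N, l = N + 1 := ⟨l - 1, by omega⟩
  set η := etaRatio (N + 1) d W ΔW U ΔU
  have hL : 0 ≤ L := nonneg_of_forall_abs_sub_le_mul (hLipφ 0 (by omega))
  have hM₁ : 0 ≤ M₁ := (specNorm_nonneg _).trans (hU 0 (by omega))
  have hM₂ : 0 ≤ M₂ := (specNorm_nonneg _).trans (hW 0 (by omega))
  have hη0 : 0 ≤ η := etaRatio_nonneg _ d W ΔW U ΔU
  have hηN : (N + 1) * η ≤ 1 := by
    rw [← le_div_iff₀' (by positivity)]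
    exact_mod_cast hη
  have key := euclNorm_mpgnnOut_sub_le (P := P) (X := X) N hL hM₁ hη0 hηN hLipφ hLipρ hLipψ
    hφ0 hρ0 hψ0 hU hW (fun k hk => specNorm_le_etaRatio_mul_of_lt_sub_one hk (hUne k hk))
    (fun k hk => specNorm_le_etaRatio_mul_of_lt hk (hWne k hk))
  have := specNorm_nonneg X
  refine ⟨fun hτ => key.trans ?_, fun hτ => key.trans_eq ?_⟩
  · rw [hτ]
    simp only [one_pow, sum_const, card_range, nsmul_eq_mul, mul_one]
    push_cast
    have hN : ((N : ℝ) + 1) * N ≤ (N + 1 + 1) ^ 2 := by nlinarith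
    calc _ = Real.exp 1 * η * L * M₁ * M₂ * specNorm X * ((N + 1) * N) := by ring
      _ ≤ _ := by gcongr
  · rw [geom_sum_eq hτ, Nat.add_sub_cancel]
    push_cast
    ring

/-- Perturbation bound for the output of an `l`-layer MPGNN: with
`η = max_i {‖ΔU_i‖₂/‖U_i‖₂, ‖ΔW_i‖₂/‖W_i‖₂} ≤ 1/l` and `τ = L³ M₂ ‖P‖₂`,
`‖f_{w+Δw}(G) - f_w(G)‖₂ ≤ e η L M₁ M₂ ‖X‖₂ (l+1)²` if `τ = 1`, and
`‖f_{w+Δw}(G) - f_w(G)‖₂ ≤ e η l L M₁ M₂ ‖X‖₂ (τ^{l-1}-1)/(τ-1)` if `τ ≠ 1`. -/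
theorem mpgnnOut_pert_norm_le (n l : ℕ) (hl : 2 ≤ l) (d : ℕ → ℕ) (φ ρ ψ : ℕ → ℝ → ℝ)
    (W ΔW : ∀ k : ℕ, Matrix (Fin (d k)) (Fin (d (k + 1))) ℝ)
    (U ΔU : ∀ k : ℕ, Matrix (Fin (d 0)) (Fin (d (k + 1))) ℝ)
    (L M₁ M₂ : ℝ)
    (hLipφ : ∀ k, k < l - 1 → ∀ x y : ℝ, |φ k x - φ k y| ≤ L * |x - y|)
    (hLipρ : ∀ k, k < l - 1 → ∀ x y : ℝ, |ρ k x - ρ k y| ≤ L * |x - y|)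
    (hLipψ : ∀ k, k < l - 1 → ∀ x y : ℝ, |ψ k x - ψ k y| ≤ L * |x - y|)
    (hφ0 : ∀ k, k < l - 1 → φ k 0 = 0) (hρ0 : ∀ k, k < l - 1 → ρ k 0 = 0)
    (hψ0 : ∀ k, k < l - 1 → ψ k 0 = 0)
    (hWne : ∀ k, k < l → W k ≠ 0) (hUne : ∀ k, k < l - 1 → U k ≠ 0)
    (hU : ∀ k, k < l - 1 → specNorm (U k) ≤ M₁)
    (hW : ∀ k, k < l → specNorm (W k) ≤ M₂)
    (hη : etaRatio l d W ΔW U ΔU ≤ 1 / (l : ℝ))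
    (P : Matrix (Fin n) (Fin n) ℝ) (X : Matrix (Fin n) (Fin (d 0)) ℝ)
    (A : Matrix (Fin n) (Fin n) ℝ) :
    (L ^ 3 * M₂ * specNorm P = 1 →
      euclNorm (fun j => mpgnnOut d φ ρ ψ (fun k => W k + ΔW k) (fun k => U k + ΔU k) P X l j -
          mpgnnOut d φ ρ ψ W U P X l j) ≤
        Real.exp 1 * etaRatio l d W ΔW U ΔU * L * M₁ * M₂ * specNorm X * (l + 1) ^ 2) ∧
    (L ^ 3 * M₂ * specNorm P ≠ 1 →
      euclNorm (fun j => mpgnnOut d φ ρ ψ (fun k => W k + ΔW k) (fun k => U k + ΔU k) P X l j -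
          mpgnnOut d φ ρ ψ W U P X l j) ≤
        Real.exp 1 * etaRatio l d W ΔW U ΔU * l * L * M₁ * M₂ * specNorm X *
          (((L ^ 3 * M₂ * specNorm P) ^ (l - 1) - 1) / (L ^ 3 * M₂ * specNorm P - 1))) :=
  mpgnnOut_pert_norm_le_general n l hl d φ ρ ψ W ΔW U ΔU L M₁ M₂ hLipφ hLipρ hLipψ hφ0 hρ0 hψ0 hWne
    hUne hU hW hη P X
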